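/- arXiv:2306.16775 — 6 statements merged into one kernel-verified Lean document; each statement's English description precedes it below -/
import Mathlib

section
/- Let G be a finite simple graph on vertex set V and let k be a natural number. If (a_1,…,a_p) is a terminal k-deletion sequence for G and (b_1,…,b_q) is any valid k-deletion sequence for G, then {b_1,…,b_q} ⊆ {a_1,…,a_p}. -/
variable {V : Type*}

/-- The degree of `v` within the subgraph of `G` induced by the vertex set `S`. -/
def degIn [DecidableEq V] (G : SimpleGraph V) [DecidableRel G.Adj]
    (S : Finset V) (v : V) : ℕ :=
  (S.filter (fun w => G.Adj v w)).card

/-- `L` is a valid `k`-deletion sequence for `G`: a sequence of distinct vertices such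
that each vertex has degree less than `k` in the subgraph induced by the vertices not
yet deleted. -/
def IsValidDeletionSeq [Fintype V] [DecidableEq V] (G : SimpleGraph V) [DecidableRel G.Adj]
    (k : ℕ) (L : List V) : Prop :=
  L.Nodup ∧ ∀ i : Fin L.length,
    degIn G (Finset.univ \ (L.take i.1).toFinset) (L.get i) < k

/-- `L` is a terminal `k`-deletion sequence for `G`: a valid `k`-deletion sequence after
which every remaining vertex has degree at least `k` in the remaining induced subgraph. -/
def IsTerminalDeletionSeq [Fintype V] [DecidableEq V] (G : SimpleGraph V) [DecidableRel G.Adj]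
    (k : ℕ) (L : List V) : Prop :=
  IsValidDeletionSeq G k L ∧
  ∀ v : V, v ∉ L → k ≤ degIn G (Finset.univ \ L.toFinset) v

lemma degIn_mono [DecidableEq V] (G : SimpleGraph V) [DecidableRel G.Adj]
    {S T : Finset V} (h : S ⊆ T) (v : V) : degIn G S v ≤ degIn G T v :=
  Finset.card_le_card (Finset.filter_subset_filter _ h)

/-- If `La` is a terminal `k`-deletion sequence and `Lb` is any valid `k`-deletion
sequence, then the vertices deleted by `Lb` form a subset of those deleted by `La`. -/
theorem valid_subset_terminal [Fintype V] [DecidableEq V]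
    (G : SimpleGraph V) [DecidableRel G.Adj] (k : ℕ) (La Lb : List V)
    (ha : IsTerminalDeletionSeq G k La) (hb : IsValidDeletionSeq G k Lb) :
    Lb.toFinset ⊆ La.toFinset := by
  have key : ∀ n : ℕ, ∀ i : Fin Lb.length, i.1 = n → Lb.get i ∈ La := by
    intro n
    induction n using Nat.strong_induction_on with
    | _ n ih =>
      intro i hin
      by_contra hnot
      have h1 := ha.2 (Lb.get i) hnot
      have h2 := hb.2 i
      have hsub : Finset.univ \ La.toFinset ⊆ Finset.univ \ (Lb.take i.1).toFinset := by
        apply Finset.sdiff_subset_sdiff (le_refl _)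
        intro x hx
        rw [List.mem_toFinset] at hx ⊢
        obtain ⟨j, hj, hx⟩ := List.mem_iff_getElem.mp hx
        have hjlen : j < Lb.length := lt_of_lt_of_le hj (by simp [List.length_take])
        have hji : j < i.1 := lt_of_lt_of_le hj (by simp [List.length_take])
        have := ih j (by omega) ⟨j, hjlen⟩ rfl
        simpa [← hx, List.getElem_take] using this
      exact absurd (lt_of_le_of_lt (le_trans h1 (degIn_mono G hsub _)) h2) (lt_irrefl _)
  intro v hv
  rw [List.mem_toFinset] at hv ⊢
  obtain ⟨i, hi, rfl⟩ := List.mem_iff_getElem.mp hv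
  exact key i ⟨i, hi⟩ rfl
end

section
/- Let G be a finite simple graph with edge set E and clique number ω(G), and let (e_1,…,e_{i−1}) be a sequence of distinct edges of G. For each j ≤ i, let G_j be the spanning subgraph of G with edge set E ∖ {e_1,…,e_{j−1}}, and for j < i let N_j be the set of common neighbors in G_j of the two endpoints of e_j. Then ω(G) = max( ω(G_i), max_{1 ≤ j < i} ( 2 + ω(G[N_j]) ) ), where G[N_j] denotes the subgraph of G induced by N_j. In particular, either a maximum clique of G_i is a maximum clique of G, or for some j < i the endpoints of e_j together with a maximum clique of G[N_j] form a maximum clique of G. -/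
/-! If a maximum clique `K` of `G` is not a clique of `G_i`, it contains some `e_j`; take `j`
least. No earlier `e_k` lies inside `K`, so `K` is still a clique of `G_j`, and `K` minus the
endpoints of `e_j` is a clique of `G` inside `N_j`. Conversely, the endpoints of any `e_j`
extend a clique of `G[N_j]` to a clique of `G`. -/

/-- The clique number `ω(G)` of a graph `G`: the largest size of a set of pairwise
adjacent vertices (0 for a graph with no vertices). -/
noncomputable def cliqueNum' {V : Type*} (G : SimpleGraph V) : ℕ :=
  sSup {n | ∃ s : Finset V, G.IsNClique n s}

/-- The clique number `ω(G[N])` of the subgraph of `G` induced by the vertex set `N`. -/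
noncomputable def cliqueNumOn {V : Type*} (G : SimpleGraph V) (N : Set V) : ℕ :=
  sSup {n | ∃ s : Finset V, ↑s ⊆ N ∧ G.IsNClique n s}

theorem List.exists_get_forall_mem_take_not {α : Type*} {p : α → Prop} {L : List α}
    (h : ∃ e ∈ L, p e) : ∃ j : Fin L.length, p (L.get j) ∧ ∀ e ∈ L.take j, ¬ p e := by
  classical
  refine ⟨⟨L.findIdx (p ·), List.findIdx_lt_length_of_exists (by simpa using h)⟩, ?_, ?_⟩
  · simpa using List.findIdx_getElem (p := (p ·))
  · intro e he
    obtain ⟨i, hi, rfl⟩ := List.mem_take_iff_getElem.mp he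
    simpa using List.not_of_lt_findIdx (p := (p ·)) (lt_of_lt_of_le hi inf_le_left)

namespace SimpleGraph

open Finset

variable {V : Type*} {G H : SimpleGraph V}

theorem IsClique.deleteEdges_of_disjoint_sym2 {s : Set V} {D : Set (Sym2 V)}
    (hs : G.IsClique s) (hD : Disjoint D s.sym2) : (G.deleteEdges D).IsClique s :=
  fun _ ha _ hb hab => deleteEdges_adj.mpr
    ⟨hs ha hb hab, fun h => Set.disjoint_left.mp hD h (Set.mk_mem_sym2_iff.mpr ⟨ha, hb⟩)⟩

theorem cliqueNum'_eq_cliqueNum (G : SimpleGraph V) : cliqueNum' G = G.cliqueNum := rfl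

theorem cliqueNum_mono [Finite V] (h : H ≤ G) : H.cliqueNum ≤ G.cliqueNum := by
  obtain ⟨s, hs⟩ := H.exists_isNClique_cliqueNum
  rw [← hs.card_eq]
  exact IsClique.card_le_cliqueNum (tc := hs.isClique.mono h)

theorem IsClique.card_le_cliqueNumOn [Finite V] {s : Finset V} {N : Set V} (hs : G.IsClique s)
    (hsN : ↑s ⊆ N) : #s ≤ cliqueNumOn G N := by
  have := Fintype.ofFinite V
  refine le_csSup ⟨Fintype.card V, ?_⟩ ⟨s, hsN, hs, rfl⟩
  rintro _ ⟨t, -, -, rfl⟩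
  exact t.card_le_univ

theorem exists_isNClique_cliqueNumOn (G : SimpleGraph V) (N : Set V) :
    ∃ s : Finset V, ↑s ⊆ N ∧ G.IsNClique (cliqueNumOn G N) s := by
  by_cases h : BddAbove {n | ∃ s : Finset V, ↑s ⊆ N ∧ G.IsNClique n s}
  · exact Nat.sSup_mem (s := {n | ∃ s : Finset V, ↑s ⊆ N ∧ G.IsNClique n s}) ⟨0, ∅, by simp⟩ h
  · exact ⟨∅, by simp [cliqueNumOn, h]⟩

theorem two_add_cliqueNumOn_le [Finite V] {e : Sym2 V} (he : e ∈ G.edgeSet) (hHG : H ≤ G) :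
    2 + cliqueNumOn G {w | ∀ x ∈ e, H.Adj x w} ≤ G.cliqueNum := by
  classical
  induction e using Sym2.ind with | h u v => ?_
  obtain ⟨t, htN, ht⟩ := exists_isNClique_cliqueNumOn G {w | ∀ x ∈ s(u, v), H.Adj x w}
  have hN : ∀ w ∈ t, G.Adj u w ∧ G.Adj v w := fun w hw => by
    have huw : H.Adj u w ∧ H.Adj v w := by simpa using htN hw
    exact ⟨hHG huw.1, hHG huw.2⟩
  have huvt := (ht.insert fun w hw => (hN w hw).2).insert (a := u) <| by
    simpa using ⟨he, fun w hw => (hN w hw).1⟩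
  rw [add_comm, ← huvt.card_eq]
  exact IsClique.card_le_cliqueNum (tc := huvt.isClique)

theorem IsNClique.le_two_add_cliqueNumOn [Finite V] {n : ℕ} {s : Finset V} {e : Sym2 V}
    {D : Set (Sym2 V)} (hs : G.IsNClique n s) (hes : e ∈ (s : Set V).sym2)
    (hD : Disjoint D (s : Set V).sym2) :
    n ≤ 2 + cliqueNumOn G {w | ∀ x ∈ e, (G.deleteEdges D).Adj x w} := by
  classical
  induction e using Sym2.ind with | h u v => ?_
  obtain ⟨hu, hv⟩ := Set.mk_mem_sym2_iff.mp hes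
  have hsD := hs.isClique.deleteEdges_of_disjoint_sym2 hD
  have hsub : ↑(s \ {u, v}) ⊆ {w | ∀ x ∈ s(u, v), (G.deleteEdges D).Adj x w} := by
    intro w hw
    simp only [mem_coe, mem_sdiff, mem_insert, mem_singleton, not_or] at hw
    simp only [Set.mem_ofPred_eq, Sym2.mem_iff, forall_eq_or_imp, forall_eq]
    exact ⟨hsD hu hw.1 (Ne.symm hw.2.1), hsD hv hw.1 (Ne.symm hw.2.2)⟩
  have hcard := (hs.isClique.subset (by simp)).card_le_cliqueNumOn hsub
  have := le_card_sdiff {u, v} s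
  have := card_le_two (a := u) (b := v)
  have := hs.card_eq
  omega

end SimpleGraph

theorem cliqueNum_eq_max_of_edge_seq_general {V : Type*} [Fintype V]
    (G : SimpleGraph V) (L : List (Sym2 V))
    (hE : ∀ e ∈ L, e ∈ G.edgeSet) :
    cliqueNum' G =
      max (cliqueNum' (G.deleteEdges {e | e ∈ L}))
        ((Finset.univ : Finset (Fin L.length)).sup fun j =>
          2 + cliqueNumOn G
            {w | ∀ x ∈ L.get j, (G.deleteEdges {e | e ∈ L.take j.1}).Adj x w}) := by
  simp only [SimpleGraph.cliqueNum'_eq_cliqueNum]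
  apply le_antisymm
  · obtain ⟨s, hs⟩ := G.exists_isNClique_cliqueNum
    by_cases hsL : (G.deleteEdges {e | e ∈ L}).IsClique (s : Set V)
    · exact le_max_of_le_left (hs.card_eq ▸ SimpleGraph.IsClique.card_le_cliqueNum (tc := hsL))
    obtain ⟨e, heL, hes⟩ : ∃ e ∈ L, e ∈ (s : Set V).sym2 := by
      by_contra! h
      exact hsL (hs.isClique.deleteEdges_of_disjoint_sym2 (Set.disjoint_left.mpr h))
    obtain ⟨j, hj, hfirst⟩ := List.exists_get_forall_mem_take_not ⟨e, heL, hes⟩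
    refine le_max_of_le_right (le_trans ?_ (Finset.le_sup (Finset.mem_univ j)))
    exact hs.le_two_add_cliqueNumOn hj (Set.disjoint_left.mpr hfirst)
  · refine max_le (SimpleGraph.cliqueNum_mono (G.deleteEdges_le _)) (Finset.sup_le fun j _ => ?_)
    exact SimpleGraph.two_add_cliqueNumOn_le (hE _ (L.get_mem j)) (G.deleteEdges_le _)

/-- Given a sequence `L = (e_1, …, e_{i-1})` of distinct edges of `G`, letting
`G_j` be the spanning subgraph of `G` with edge set `E ∖ {e_1, …, e_{j-1}}` and `N_j`
the set of common neighbors in `G_j` of the endpoints of `e_j`, the clique number of `G`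
equals the maximum of `ω(G_i)` and `max_j (2 + ω(G[N_j]))`. -/
theorem cliqueNum_eq_max_of_edge_seq {V : Type*} [Fintype V] [DecidableEq V]
    (G : SimpleGraph V) (L : List (Sym2 V)) (hnd : L.Nodup)
    (hE : ∀ e ∈ L, e ∈ G.edgeSet) :
    cliqueNum' G =
      max (cliqueNum' (G.deleteEdges {e | e ∈ L}))
        ((Finset.univ : Finset (Fin L.length)).sup fun j =>
          2 + cliqueNumOn G
            {w | ∀ x ∈ L.get j, (G.deleteEdges {e | e ∈ L.take j.1}).Adj x w}) :=
  cliqueNum_eq_max_of_edge_seq_general G L hE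
end

section
/- Every hyperbolic unit disk graph admits a co-bipartite neighborhood edge elimination ordering (CNEEO). That is, if V is a finite set, p : V → ℍ² is a family of points in the hyperbolic plane, R ≥ 0, and G is the simple graph on V with u adjacent to v iff u ≠ v and d(p(u), p(v)) ≤ R, then there exists an ordering (e_1,…,e_m) of all edges of G such that for every i, letting G_L[i] be the spanning subgraph of G with edge set {e_i,…,e_m} and N_i the set of common neighbors in G_L[i] of the two endpoints of e_i, the vertex set N_i can be partitioned into two (possibly empty) sets each of which is a clique of G. -/
/-!
Sort the edges by decreasing hyperbolic length. When `e_i = uv` is eliminated, every remaining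
edge is at most as long as `uv`, so each common neighbour `w` of `u` and `v` in `G_L[i]` lies in
the lens `{a | d(a, u) ≤ d(u, v), d(a, v) ≤ d(u, v)}`. The geodesic through `u` and `v` cuts this
lens into two halves of diameter at most `d(u, v) ≤ R`, hence into two cliques.

For the diameter bound, move `u` to `i` and `v` to `t i` with `t ≥ 1` by an element of `SL(2, ℝ)`;
the geodesic becomes the imaginary axis, the lens lies in the strip `1 ≤ Im ≤ t`, and the bound
becomes a polynomial inequality in the coordinates.
-/

/-- `L` is a co-bipartite neighborhood edge elimination ordering (CNEEO) of `G`: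
an ordering of all edges of `G` such that for every `i`, letting `G_L[i]` be the
spanning subgraph with edge set `{e_i, …, e_m}` and `N_i` the set of common neighbors
in `G_L[i]` of the two endpoints of `e_i`, the set `N_i` can be partitioned into two
(possibly empty) cliques of `G`. -/
def IsCNEEO {V : Type*} (G : SimpleGraph V) (L : List (Sym2 V)) : Prop :=
  L.Nodup ∧ (∀ e, e ∈ L ↔ e ∈ G.edgeSet) ∧
  ∀ i : Fin L.length, ∃ A B : Set V,
    {w | ∀ x ∈ L.get i, (G.deleteEdges {e | e ∈ L.take i.1}).Adj x w} = A ∪ B ∧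
    Disjoint A B ∧ G.IsClique A ∧ G.IsClique B

open Real UpperHalfPlane
open scoped MatrixGroups

namespace Metric

variable {X : Type*} [PseudoMetricSpace X]

def lens (u v : X) : Set X := {a | dist a u ≤ dist u v ∧ dist a v ≤ dist u v}

lemma smul_mem_lens_smul_iff {M : Type*} [SMul M X] [IsIsometricSMul M X] (g : M) {u v a : X} :
    g • a ∈ lens (g • u) (g • v) ↔ a ∈ lens u v := by
  simp only [lens, Set.mem_ofPred_eq, dist_smul]

end Metric

open Metric

section LensAlgebra

/-! For `t ≥ 1`, the conditions `t * (x² + y² + 1) ≤ (t² + 1) * y` and `x² + y² + t² ≤ (t² + 1) * y`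
say that `x + y i` is within hyperbolic distance `d(i, t i)` of `i` and of `t i` respectively. -/

variable {t x y x₁ y₁ x₂ y₂ : ℝ}

lemma one_le_of_lens_right (ht : 1 ≤ t) (h : x ^ 2 + y ^ 2 + t ^ 2 ≤ (t ^ 2 + 1) * y) : 1 ≤ y := by
  by_contra! hy
  nlinarith [mul_pos (sub_pos.2 hy) (by nlinarith : 0 < t ^ 2 - y), sq_nonneg x]

lemma le_of_lens_left (ht : 1 ≤ t) (h : t * (x ^ 2 + y ^ 2 + 1) ≤ (t ^ 2 + 1) * y) : y ≤ t := by
  by_contra! hy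
  nlinarith [mul_pos (by nlinarith : 0 < t * y - 1) (sub_pos.2 hy), sq_nonneg x]

lemma sq_sub_add_sq_sub_mul_le_of_lens (ht : 1 ≤ t) (hx : 0 ≤ x₁ * x₂)
    (hP₁ : t * (x₁ ^ 2 + y₁ ^ 2 + 1) ≤ (t ^ 2 + 1) * y₁)
    (hQ₁ : x₁ ^ 2 + y₁ ^ 2 + t ^ 2 ≤ (t ^ 2 + 1) * y₁)
    (hP₂ : t * (x₂ ^ 2 + y₂ ^ 2 + 1) ≤ (t ^ 2 + 1) * y₂)
    (hQ₂ : x₂ ^ 2 + y₂ ^ 2 + t ^ 2 ≤ (t ^ 2 + 1) * y₂) :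
    ((x₁ - x₂) ^ 2 + (y₁ - y₂) ^ 2) * t ≤ (1 - t) ^ 2 * (y₁ * y₂) := by
  wlog hle : x₂ ^ 2 ≤ x₁ ^ 2 generalizing x₁ y₁ x₂ y₂
  · have := this (by linarith) hP₂ hQ₂ hP₁ hQ₁ (by linarith)
    linarith
  have hsub : (x₁ - x₂) ^ 2 ≤ x₁ ^ 2 := by nlinarith
  have hy₂_ge := one_le_of_lens_right ht hQ₂
  have hy₂_le := le_of_lens_left ht hP₂
  -- bound `x₁ ^ 2` by whichever of `hP₁`, `hQ₁` is sharper at height `y₁`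
  rcases le_total ((t ^ 2 + 1) * y₁) (t * (t + 1)) with h | h
  · nlinarith [mul_nonneg (sub_nonneg.2 hy₂_le) (by nlinarith : 0 ≤ t * (t + y₂) - (t ^ 2 + 1) * y₁)]
  · nlinarith [mul_nonneg (sub_nonneg.2 hy₂_ge) (by nlinarith : 0 ≤ (t ^ 2 + 1) * y₁ - t * (y₂ + 1))]

end LensAlgebra

namespace UpperHalfPlane

lemma dist_le_dist_iff (z w z' w' : ℍ) :
    dist z w ≤ dist z' w' ↔
      ((z.re - w.re) ^ 2 + (z.im - w.im) ^ 2) * (z'.im * w'.im) ≤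
        ((z'.re - w'.re) ^ 2 + (z'.im - w'.im) ^ 2) * (z.im * w.im) := by
  have := z.im_pos; have := w.im_pos; have := z'.im_pos; have := w'.im_pos
  rw [← abs_of_nonneg (dist_nonneg (x := z)), ← abs_of_nonneg (dist_nonneg (x := z')),
    ← cosh_le_cosh, cosh_dist, cosh_dist, add_le_add_iff_left,
    div_le_div_iff₀ (by positivity) (by positivity), Complex.dist_eq, Complex.dist_eq,
    Complex.sq_norm, Complex.sq_norm]
  simp only [Complex.normSq_apply, Complex.sub_re, Complex.sub_im, coe_re, coe_im]
  constructor <;> intro h <;> nlinarith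

lemma dist_le_dist_I_of_mem_lens {v a b : ℍ} (hv : v.re = 0) (ht : 1 ≤ v.im)
    (ha : a ∈ lens I v) (hb : b ∈ lens I v) (hab : 0 ≤ a.re * b.re) : dist a b ≤ dist I v := by
  simp only [lens, Set.mem_ofPred_eq, dist_le_dist_iff, I_re, I_im, hv] at ha hb ⊢
  obtain ⟨ha₁, ha₂⟩ := ha
  obtain ⟨hb₁, hb₂⟩ := hb
  have htpos : 0 < v.im := by linarith
  have hQa : a.re ^ 2 + a.im ^ 2 + v.im ^ 2 ≤ (v.im ^ 2 + 1) * a.im :=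
    le_of_mul_le_mul_right (by linarith) htpos
  have hQb : b.re ^ 2 + b.im ^ 2 + v.im ^ 2 ≤ (v.im ^ 2 + 1) * b.im :=
    le_of_mul_le_mul_right (by linarith) htpos
  linarith [sq_sub_add_sq_sub_mul_le_of_lens ht hab (by linarith) hQa (by linarith) hQb]

noncomputable def rotation (θ : ℝ) : SL(2, ℝ) :=
  ⟨!![cos θ, sin θ; -sin θ, cos θ], by simp [Matrix.det_fin_two_of, ← sq]⟩

lemma coe_rotation_smul (θ : ℝ) (z : ℍ) :
    (↑(rotation θ • z) : ℂ) = (cos θ * z + sin θ) / (-sin θ * z + cos θ) := by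
  rw [coe_specialLinearGroup_apply]; simp [rotation]

lemma rotation_denom_ne_zero (θ : ℝ) (z : ℍ) : -sin θ * (z : ℂ) + cos θ ≠ 0 := by
  simpa [denom, rotation, Matrix.SpecialLinearGroup.toGL] using denom_ne_zero (rotation θ) z

lemma rotation_smul_I (θ : ℝ) : rotation θ • I = I := by
  ext
  rw [coe_rotation_smul, div_eq_iff (rotation_denom_ne_zero θ I), coe_I]
  apply Complex.ext <;> simp

lemma re_rotation_smul (θ : ℝ) (z : ℍ) :
    (rotation θ • z).re = (z.re * cos (2 * θ) + (1 - Complex.normSq z) / 2 * sin (2 * θ)) /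
      Complex.normSq (-sin θ * (z : ℂ) + cos θ) := by
  rw [← coe_re, coe_rotation_smul, Complex.div_re, ← add_div, cos_two_mul', sin_two_mul]
  congr 1
  simp only [Complex.normSq_apply, Complex.add_re, Complex.add_im, Complex.mul_re, Complex.mul_im,
    Complex.neg_re, Complex.neg_im, Complex.ofReal_re, Complex.ofReal_im, coe_re, coe_im]
  ring

lemma exists_re_rotation_smul_eq_zero (z : ℍ) : ∃ θ, (rotation θ • z).re = 0 := by
  set w : ℂ := ⟨(1 - Complex.normSq z) / 2, -z.re⟩
  refine ⟨Complex.arg w / 2, ?_⟩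
  rw [re_rotation_smul, mul_div_cancel₀ _ two_ne_zero, div_eq_zero_iff]
  left
  rcases eq_or_ne w 0 with hw | hw
  · obtain ⟨hk, hre⟩ : 1 - Complex.normSq z = 0 ∧ z.re = 0 := by
      simpa [w, Complex.ext_iff] using hw
    simp [hk, hre]
  · -- multiplied by `‖w‖`, the numerator becomes `z.re * w.re + w.re * w.im = 0`
    have hnorm : ‖w‖ ≠ 0 := norm_ne_zero_iff.2 hw
    refine (mul_eq_zero.1 ?_).resolve_left hnorm
    have hc := Complex.norm_mul_cos_arg w
    have hs := Complex.norm_mul_sin_arg w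
    linear_combination z.re * hc + (1 - Complex.normSq z) / 2 * hs

lemma rotation_pi_div_two_smul_of_re_eq_zero {z : ℍ} (hz : z.re = 0) :
    (rotation (π / 2) • z).re = 0 ∧ (rotation (π / 2) • z).im = z.im⁻¹ := by
  have hcoe : (↑(rotation (π / 2) • z) : ℂ) = -(z : ℂ)⁻¹ := by
    rw [coe_rotation_smul, cos_pi_div_two, sin_pi_div_two]; simp
  have hz' : (z : ℂ) = z.im * Complex.I := Complex.ext (by simp [hz]) (by simp)
  rw [← coe_re, ← coe_im, hcoe, hz']
  have := z.im_pos.ne'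
  constructor <;> simp

lemma exists_smul_eq_I_and_re_smul_eq_zero (u v : ℍ) :
    ∃ g : SL(2, ℝ), g • u = I ∧ (g • v).re = 0 ∧ 1 ≤ (g • v).im := by
  have hu : u.toSL2R⁻¹ • u = I := inv_smul_eq_iff.2 (toSL2R_smul_I u).symm
  obtain ⟨θ, hθ⟩ := exists_re_rotation_smul_eq_zero (u.toSL2R⁻¹ • v)
  set g := rotation θ * u.toSL2R⁻¹
  have hgu : g • u = I := by rw [mul_smul, hu, rotation_smul_I]
  have hgv : (g • v).re = 0 := by rwa [mul_smul]
  rcases le_or_gt 1 (g • v).im with h | h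
  · exact ⟨g, hgu, hgv, h⟩
  · obtain ⟨hre, him⟩ := rotation_pi_div_two_smul_of_re_eq_zero hgv
    refine ⟨rotation (π / 2) * g, by rw [mul_smul, hgu, rotation_smul_I], by rwa [mul_smul], ?_⟩
    rw [mul_smul, him]
    exact one_le_inv_iff₀.2 ⟨(g • v).im_pos, h.le⟩

lemma exists_lens_split (u v : ℍ) : ∃ S : Set ℍ,
    ∀ a ∈ lens u v, ∀ b ∈ lens u v, (a ∈ S ↔ b ∈ S) → dist a b ≤ dist u v := by
  obtain ⟨g, hgu, hgv, ht⟩ := exists_smul_eq_I_and_re_smul_eq_zero u v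
  refine ⟨{z | 0 ≤ (g • z).re}, fun a ha b hb hab => ?_⟩
  rw [← smul_mem_lens_smul_iff g, hgu] at ha hb
  have hsign : 0 ≤ (g • a).re * (g • b).re := by
    by_cases h : 0 ≤ (g • a).re
    · exact mul_nonneg h (hab.1 h)
    · exact (mul_pos_of_neg_of_neg (not_le.1 h) (not_le.1 (mt hab.2 h))).le
  rw [← dist_smul g, ← dist_smul g u, hgu]
  exact dist_le_dist_I_of_mem_lens hgv ht ha hb hsign

end UpperHalfPlane

lemma Finset.exists_nodup_list_pairwise_ge {α β : Type*} [LinearOrder β] (s : Finset α)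
    (f : α → β) :
    ∃ L : List α, L.Nodup ∧ (∀ a, a ∈ L ↔ a ∈ s) ∧ L.Pairwise fun a b => f b ≤ f a := by
  have hperm := List.mergeSort_perm s.toList fun a b => decide (f b ≤ f a)
  refine ⟨_, hperm.nodup_iff.2 s.nodup_toList, fun a => by rw [hperm.mem_iff, mem_toList], ?_⟩
  simpa using List.pairwise_mergeSort (le := fun a b => decide (f b ≤ f a))
    (fun a b c hab hbc => by simp only [decide_eq_true_eq] at hab hbc ⊢; exact hbc.trans hab)
    (fun a b => by simpa using le_total (f b) (f a)) s.toList

lemma List.Pairwise.le_of_mem_of_not_mem_take {α β : Type*} [Preorder β] {f : α → β} {L : List α}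
    (hL : L.Pairwise fun a b => f b ≤ f a) (i : Fin L.length) {a : α} (ha : a ∈ L)
    (hi : a ∉ L.take i) : f a ≤ f (L.get i) := by
  rw [← L.take_append_drop i, mem_append, drop_eq_getElem_cons i.isLt] at ha
  have hdrop := hL.sublist (L.drop_sublist i)
  rw [drop_eq_getElem_cons i.isLt, pairwise_cons] at hdrop
  rcases mem_cons.1 (ha.resolve_left hi) with rfl | ha
  · exact le_rfl
  · exact hdrop.1 a ha

namespace SimpleGraph

variable {V : Type*} {G : SimpleGraph V}

lemma exists_partition_isClique_of_subset_union {S A B : Set V} (hS : S ⊆ A ∪ B)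
    (hA : G.IsClique A) (hB : G.IsClique B) :
    ∃ A' B' : Set V, S = A' ∪ B' ∧ Disjoint A' B' ∧ G.IsClique A' ∧ G.IsClique B' :=
  ⟨S ∩ A, S \ A, (Set.inter_union_sdiff S A).symm, Set.disjoint_sdiff_inter.symm,
    hA.subset Set.inter_subset_right, hB.subset fun _ hw => (hS hw.1).resolve_left hw.2⟩

lemma le_of_adj_deleteEdges_take {β : Type*} [Preorder β] {f : Sym2 V → β} {L : List (Sym2 V)}
    (hL : ∀ e, e ∈ L ↔ e ∈ G.edgeSet) (hsort : L.Pairwise fun e e' => f e' ≤ f e)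
    (i : Fin L.length) {x w : V} (h : (G.deleteEdges {e | e ∈ L.take i}).Adj x w) :
    f s(x, w) ≤ f (L.get i) := by
  rw [deleteEdges_adj] at h
  exact hsort.le_of_mem_of_not_mem_take i ((hL _).2 h.1) h.2

end SimpleGraph

theorem exists_isCNEEO_of_lens_split {V X : Type*} [Finite V] [PseudoMetricSpace X]
    (hX : ∀ u v : X, ∃ S : Set X,
      ∀ a ∈ lens u v, ∀ b ∈ lens u v, (a ∈ S ↔ b ∈ S) → dist a b ≤ dist u v)
    (p : V → X) (R : ℝ) (G : SimpleGraph V)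
    (hG : ∀ u v, G.Adj u v ↔ u ≠ v ∧ dist (p u) (p v) ≤ R) :
    ∃ L : List (Sym2 V), IsCNEEO G L := by
  classical
  have := Fintype.ofFinite V
  let len : Sym2 V → ℝ := Sym2.lift ⟨fun a b => dist (p a) (p b), fun _ _ => dist_comm _ _⟩
  obtain ⟨L, hnodup, hmem, hsort⟩ := G.edgeFinset.exists_nodup_list_pairwise_ge len
  simp only [SimpleGraph.mem_edgeFinset] at hmem
  refine ⟨L, hnodup, hmem, fun i => ?_⟩
  obtain ⟨u, v, huv⟩ : ∃ u v, L.get i = s(u, v) := ⟨_, _, (Quot.out_eq _).symm⟩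
  have hadj : G.Adj u v := (hmem _).1 (huv ▸ L.get_mem i)
  have hR : dist (p u) (p v) ≤ R := ((hG u v).1 hadj).2
  have hlens : {w | ∀ x ∈ L.get i, (G.deleteEdges {e | e ∈ L.take i}).Adj x w} ⊆
      {w | p w ∈ lens (p u) (p v)} := by
    intro w hw
    have hu := G.le_of_adj_deleteEdges_take hmem hsort i (hw u (huv ▸ Sym2.mem_mk_left u v))
    have hv := G.le_of_adj_deleteEdges_take hmem hsort i (hw v (huv ▸ Sym2.mem_mk_right u v))
    simp only [huv, len, Sym2.lift_mk] at hu hv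
    exact ⟨dist_comm (p u) (p w) ▸ hu, dist_comm (p v) (p w) ▸ hv⟩
  obtain ⟨S, hS⟩ := hX (p u) (p v)
  refine G.exists_partition_isClique_of_subset_union
    (A := {w | p w ∈ lens (p u) (p v) ∧ p w ∈ S}) (B := {w | p w ∈ lens (p u) (p v) ∧ p w ∉ S})
    (fun w hw => ?_) ?_ ?_
  · exact (em (p w ∈ S)).imp (And.intro (hlens hw)) (And.intro (hlens hw))
  · exact fun a ha b hb hab =>
      (hG a b).2 ⟨hab, (hS _ ha.1 _ hb.1 (iff_of_true ha.2 hb.2)).trans hR⟩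
  · exact fun a ha b hb hab =>
      (hG a b).2 ⟨hab, (hS _ ha.1 _ hb.1 (iff_of_false ha.2 hb.2)).trans hR⟩

theorem hyperbolicUnitDiskGraph_exists_CNEEO_general {V : Type*} [Fintype V]
    (p : V → UpperHalfPlane) (R : ℝ)
    (G : SimpleGraph V)
    (hG : ∀ u v, G.Adj u v ↔ u ≠ v ∧ dist (p u) (p v) ≤ R) :
    ∃ L : List (Sym2 V), IsCNEEO G L :=
  exists_isCNEEO_of_lens_split exists_lens_split p R G hG

/-- Every hyperbolic unit disk graph admits a CNEEO. -/
theorem hyperbolicUnitDiskGraph_exists_CNEEO {V : Type*} [Fintype V]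
    (p : V → UpperHalfPlane) (R : ℝ) (hR : 0 ≤ R)
    (G : SimpleGraph V)
    (hG : ∀ u v, G.Adj u v ↔ u ≠ v ∧ dist (p u) (p v) ≤ R) :
    ∃ L : List (Sym2 V), IsCNEEO G L :=
  hyperbolicUnitDiskGraph_exists_CNEEO_general p R G hG
end

section
/- Let u, v ∈ ℍ² be points of the hyperbolic plane with r := d(u, v) ≤ R for some R ≥ 0, and let S be a finite set of points of ℍ² such that every w ∈ S satisfies d(w, u) ≤ r and d(w, v) ≤ r. Then S can be partitioned into two sets S_1 and S_2 such that any two points lying in the same part are at hyperbolic distance at most R. In other words, in a hyperbolic unit disk graph with threshold R, the subgraph induced by the vertices lying in the lens B_u(r) ∩ B_v(r) is co-bipartite. -/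
/-!
Move `u` and `v` onto the imaginary axis by an isometry of `ℍ`. The axis cuts the lens into two
halves, and each half has diameter at most `d(u, v)`. Take `x`, `y` in the same half with
`|y.re| ≤ |x.re|`, and let `w` be the point of the axis with the same imaginary part as `y`.
Then `d(x, y) ≤ d(x, w)`. Since `y` lies in both balls, `w` lies on the geodesic segment
`[u, v]`. This segment is contained in the closed ball of radius `d(u, v)` about `x`, because a
closed ball meets a vertical geodesic in an interval.
-/

open UpperHalfPlane MatrixGroups Real

namespace UpperHalfPlane

theorem dist_le_iff_le_cosh {z w : ℍ} {r : ℝ} (hr : 0 ≤ r) :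
    dist z w ≤ r ↔ (z.re - w.re) ^ 2 + z.im ^ 2 + w.im ^ 2 ≤ 2 * cosh r * z.im * w.im := by
  rw [← cosh_strictMonoOn.le_iff_le dist_nonneg hr, cosh_dist',
    div_le_iff₀ (by have := z.im_pos; have := w.im_pos; positivity)]
  ring_nf

theorem dist_le_dist_of_im_eq {x y w : ℍ} (him : y.im = w.im)
    (hre : |x.re - y.re| ≤ |x.re - w.re|) : dist x y ≤ dist x w := by
  rw [dist_le_iff_le_cosh dist_nonneg, cosh_dist', him]
  have := x.im_pos; have := w.im_pos
  field_simp
  linarith [sq_le_sq.2 hre]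

theorem dist_le_of_re_eq_of_im_mem_Icc {x u v w : ℍ} {r : ℝ} (hu : u.re = w.re)
    (hv : v.re = w.re) (hw : w.im ∈ Set.Icc u.im v.im) (hxu : dist x u ≤ r)
    (hxv : dist x v ≤ r) : dist x w ≤ r := by
  have hr : 0 ≤ r := dist_nonneg.trans hxu
  rw [dist_le_iff_le_cosh hr] at hxu hxv ⊢
  rw [hu] at hxu
  rw [hv] at hxv
  obtain ⟨hwu, hwv⟩ := hw
  have := x.im_pos
  rcases hwu.eq_or_lt with h | h
  · rwa [← h]
  -- the quadratic `t ↦ (x.re - w.re)^2 + x.im^2 + t^2 - 2 cosh r x.im t` is convex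
  nlinarith [mul_nonneg (sub_nonneg.2 hwu) (sub_nonneg.2 hwv),
    mul_nonneg (sub_nonneg.2 hwu) (sub_nonneg.2 hxv),
    mul_nonneg (sub_nonneg.2 hwv) (sub_nonneg.2 hxu)]

theorem im_mem_Icc_of_mem_lens {u v y : ℍ} (hre : u.re = v.re) (him : u.im ≤ v.im)
    (hyu : dist y u ≤ dist u v) (hyv : dist y v ≤ dist u v) : y.im ∈ Set.Icc u.im v.im := by
  have hexp : exp (dist u v) = v.im / u.im := by
    rw [dist_of_re_eq hre, Real.dist_eq, abs_sub_comm,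
      abs_of_nonneg (sub_nonneg.2 (log_le_log u.im_pos him)), ← log_div v.im_ne_zero u.im_ne_zero,
      exp_log (div_pos v.im_pos u.im_pos)]
  constructor
  · calc u.im = v.im / exp (dist u v) := by rw [hexp, div_div_cancel₀ v.im_ne_zero]
      _ ≤ v.im / exp (dist v y) := by
        gcongr
        rwa [dist_comm]
      _ ≤ y.im := im_div_exp_dist_le v y
  · calc y.im ≤ u.im * exp (dist y u) := im_le_im_mul_exp_dist y u
      _ ≤ u.im * exp (dist u v) := by gcongr
      _ = v.im := by rw [hexp, mul_div_cancel₀ _ u.im_ne_zero]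

theorem dist_le_of_mem_lens_of_re_mul_nonneg {u v x y : ℍ} (hu : u.re = 0) (hv : v.re = 0)
    (hx : dist x u ≤ dist u v ∧ dist x v ≤ dist u v)
    (hy : dist y u ≤ dist u v ∧ dist y v ≤ dist u v) (hxy : 0 ≤ x.re * y.re) :
    dist x y ≤ dist u v := by
  wlog him : u.im ≤ v.im generalizing u v
  · rw [dist_comm u v] at hx hy ⊢
    exact this hv hu hx.symm hy.symm (le_of_not_ge him)
  wlog hyx : |y.re| ≤ |x.re| generalizing x y
  · rw [dist_comm]
    exact this (by rwa [mul_comm]) hy hx (le_of_not_ge hyx)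
  set w : ℍ := -y.re +ᵥ y
  have hw : w.re = 0 := by simp [w, vadd_re]
  have hwim : w.im = y.im := vadd_im _ _
  calc dist x y ≤ dist x w := by
        refine dist_le_dist_of_im_eq hwim.symm ?_
        rw [hw, sub_zero, ← sq_le_sq]
        nlinarith [sq_le_sq.2 hyx]
    _ ≤ dist u v := dist_le_of_re_eq_of_im_mem_Icc (hu.trans hw.symm) (hv.trans hw.symm)
        (hwim ▸ im_mem_Icc_of_mem_lens (hu.trans hv.symm) him hy.1 hy.2) hx.1 hx.2

theorem re_smul_eq_zero_iff (g : SL(2, ℝ)) (z : ℍ) :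
    (g • z).re = 0 ↔ g 0 0 * g 1 0 * (z.re ^ 2 + z.im ^ 2)
      + (g 0 0 * g 1 1 + g 0 1 * g 1 0) * z.re + g 0 1 * g 1 1 = 0 := by
  have hden : Complex.normSq (g 1 0 * (z : ℂ) + g 1 1) ≠ 0 :=
    normSq_denom_ne_zero (g : GL (Fin 2) ℝ) z.im_ne_zero
  rw [re, coe_specialLinearGroup_apply, Complex.div_re, ← add_div, div_eq_zero_iff,
    or_iff_left (by simpa using hden)]
  simp only [Algebra.algebraMap_self, Fin.isValue, ringHom_apply, Complex.add_re, Complex.mul_re,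
    Complex.ofReal_re, coe_re, Complex.ofReal_im, coe_im, zero_mul, sub_zero, Complex.add_im,
    Complex.mul_im, add_zero]
  constructor <;> intro h <;> linear_combination h

theorem exists_SL2_re_smul_eq_zero_of_semicircle (c : ℝ) {ρ : ℝ} (hρ : 0 < ρ) :
    ∃ g : SL(2, ℝ), ∀ z : ℍ, (z.re - c) ^ 2 + z.im ^ 2 = ρ ^ 2 → (g • z).re = 0 := by
  -- `g` sends the endpoints `c - ρ` and `c + ρ` of the semicircle to `0` and `∞`
  set s := (√(2 * ρ))⁻¹
  have hs : s ^ 2 * (2 * ρ) = 1 := by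
    rw [inv_pow, sq_sqrt (by positivity), inv_mul_cancel₀ (by positivity)]
  have hdet : (!![s, -(s * (c - ρ)); -s, s * (c + ρ)]).det = 1 := by
    rw [Matrix.det_fin_two_of]
    linear_combination hs
  refine ⟨⟨_, hdet⟩, fun z hz => (re_smul_eq_zero_iff _ z).2 ?_⟩
  simp only [Matrix.of_apply, Matrix.cons_val', Matrix.cons_val_zero, Matrix.cons_val_one,
    Matrix.empty_val', Matrix.cons_val_fin_one]
  linear_combination -s ^ 2 * hz

theorem exists_isometry_re_eq_zero (u v : ℍ) :
    ∃ f : ℍ → ℍ, Isometry f ∧ (f u).re = 0 ∧ (f v).re = 0 := by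
  by_cases hre : u.re = v.re
  · exact ⟨(-u.re +ᵥ ·), isometry_real_vadd _, by simp [vadd_re], by simp [vadd_re, hre]⟩
  -- `u` and `v` lie on the semicircle centred at `c` and orthogonal to the real line
  set c := (v.re ^ 2 + v.im ^ 2 - u.re ^ 2 - u.im ^ 2) / (2 * (v.re - u.re))
  set ρ := √((u.re - c) ^ 2 + u.im ^ 2)
  have hρu : (u.re - c) ^ 2 + u.im ^ 2 = ρ ^ 2 := (sq_sqrt (by positivity)).symm
  have hρv : (v.re - c) ^ 2 + v.im ^ 2 = ρ ^ 2 := by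
    have hc : 2 * (v.re - u.re) * c = v.re ^ 2 + v.im ^ 2 - u.re ^ 2 - u.im ^ 2 :=
      mul_div_cancel₀ _ (mul_ne_zero two_ne_zero (sub_ne_zero.2 (Ne.symm hre)))
    linear_combination hρu - hc
  obtain ⟨g, hg⟩ := exists_SL2_re_smul_eq_zero_of_semicircle c
    (sqrt_pos.2 (by have := u.im_pos; positivity) : 0 < ρ)
  exact ⟨(g • ·), isometry_smul ℍ g, hg u hρu, hg v hρv⟩

end UpperHalfPlane

theorem lens_co_bipartite_general (R : ℝ) (u v : UpperHalfPlane)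
    (huv : dist u v ≤ R)
    (S : Set UpperHalfPlane)
    (hS : ∀ w ∈ S, dist w u ≤ dist u v ∧ dist w v ≤ dist u v) :
    ∃ S₁ S₂ : Set UpperHalfPlane, S = S₁ ∪ S₂ ∧ Disjoint S₁ S₂ ∧
      (∀ x ∈ S₁, ∀ y ∈ S₁, dist x y ≤ R) ∧
      (∀ x ∈ S₂, ∀ y ∈ S₂, dist x y ≤ R) := by
  obtain ⟨f, hf, hfu, hfv⟩ := exists_isometry_re_eq_zero u v
  have hS' : ∀ w ∈ S,
      dist (f w) (f u) ≤ dist (f u) (f v) ∧ dist (f w) (f v) ≤ dist (f u) (f v) := by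
    simpa only [hf.dist_eq] using hS
  have hside : ∀ x ∈ S, ∀ y ∈ S, 0 ≤ (f x).re * (f y).re → dist x y ≤ R := fun x hx y hy hxy =>
    calc dist x y = dist (f x) (f y) := (hf.dist_eq x y).symm
      _ ≤ dist (f u) (f v) :=
        dist_le_of_mem_lens_of_re_mul_nonneg hfu hfv (hS' x hx) (hS' y hy) hxy
      _ = dist u v := hf.dist_eq u v
      _ ≤ R := huv
  set H := {w | 0 ≤ (f w).re}
  refine ⟨S ∩ H, S \ H, (Set.inter_union_sdiff S H).symm, Set.disjoint_sdiff_inter.symm, ?_, ?_⟩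
  · rintro x ⟨hx, hxH⟩ y ⟨hy, hyH⟩
    exact hside x hx y hy (mul_nonneg hxH hyH)
  · rintro x ⟨hx, hxH⟩ y ⟨hy, hyH⟩
    exact hside x hx y hy (mul_nonneg_of_nonpos_of_nonpos (le_of_not_ge hxH) (le_of_not_ge hyH))

/-- The hyperbolic lens `B_u(r) ∩ B_v(r)` with `r = d(u,v) ≤ R` is co-bipartite with
threshold `R`: any finite set of points of the lens can be partitioned into two parts
such that two points in the same part are at hyperbolic distance at most `R`. -/
theorem lens_co_bipartite (R : ℝ) (hR : 0 ≤ R) (u v : UpperHalfPlane)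
    (huv : dist u v ≤ R)
    (S : Set UpperHalfPlane) (hfin : S.Finite)
    (hS : ∀ w ∈ S, dist w u ≤ dist u v ∧ dist w v ≤ dist u v) :
    ∃ S₁ S₂ : Set UpperHalfPlane, S = S₁ ∪ S₂ ∧ Disjoint S₁ S₂ ∧
      (∀ x ∈ S₁, ∀ y ∈ S₁, dist x y ≤ R) ∧
      (∀ x ∈ S₂, ∀ y ∈ S₂, dist x y ≤ R) :=
  lens_co_bipartite_general R u v huv S hS
end

section
/- Fix α ∈ (1/2, 1), C ∈ ℝ and c' ≥ 0, and for each n ≥ 2 set R_n = 2 ln n + C and p_n = (cosh(α(R_n/2 − c')) − 1)/(cosh(α R_n) − 1). Then there exists a constant c > 0 such that for every ε ∈ (0, 1) there is an N with the following property: for all n ≥ N, if X is a binomial random variable with parameters n and p_n (e.g. PMF.binomial), then P[ X < (1 − ε) · c · n^{1−α} ] ≤ exp( −(ε²/2) · c · n^{1−α} ). In particular, the number of vertices of a hyperbolic random graph lying in B_0(R_n/2 − c') is at least (1 − ε) c n^{1−α} with probability 1 − 2^{−Ω(n^{1−α})}. -/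
open Real ProbabilityTheory MeasureTheory Filter
open scoped NNReal ENNReal

/-!
A Chernoff bound: for `X ~ Bin(n, p)` and any `0 ≤ μ ≤ np`, evaluating the moment generating
function at `-ε` and using `1 + x ≤ eˣ`, `e^{-ε} ≤ 1 - ε + ε²/2` gives
`P[X < (1 - ε) μ] ≤ exp(-ε² μ / 2)`. It therefore suffices that `n p_n ≥ c n^{1-α}`: for large `n`
we have `cosh(α(R/2 - c')) - 1 ≥ e^{α(R/2 - c')} / 4` and `cosh(αR) - 1 ≤ e^{αR}`, whence
`p_n ≥ e^{-α(R/2 + c')} / 4 = e^{-α(C/2 + c')} n^{-α} / 4`.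
-/

theorem PMF.mgf_binomial (p : ℝ≥0) (h : p ≤ 1) (n : ℕ) (t : ℝ) :
    mgf (fun k : Fin (n + 1) => ((k : ℕ) : ℝ)) (PMF.binomial p h n).toMeasure t
      = (p * exp t + (1 - p)) ^ n := by
  rw [mgf, PMF.integral_eq_sum, add_pow, ← Fin.sum_univ_eq_sum_range]
  refine Finset.sum_congr rfl fun k _ => ?_
  simp only [PMF.binomial_apply, Fin.val_last, ENNReal.toReal_mul, ENNReal.toReal_pow,
    ENNReal.coe_toReal, ENNReal.toReal_sub_of_le (ENNReal.coe_le_one_iff.mpr h) ENNReal.one_ne_top,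
    ENNReal.toReal_one, ENNReal.toReal_natCast, smul_eq_mul, mul_pow, ← exp_nat_mul]
  rw [mul_comm t]
  ring

theorem exp_neg_le_one_sub_add_sq_div_two {x : ℝ} (hx : 0 ≤ x) :
    exp (-x) ≤ 1 - x + x ^ 2 / 2 := by
  have hprod : exp (-x) * exp x = 1 := by rw [← exp_add, neg_add_cancel, exp_zero]
  nlinarith [exp_pos (-x), mul_le_mul_of_nonneg_left (quadratic_le_exp_of_nonneg hx)
    (exp_pos (-x)).le]

theorem exp_mul_bernoulli_mgf_pow_le {p μ ε : ℝ} {n : ℕ} (hp0 : 0 ≤ p) (hp1 : p ≤ 1)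
    (hμ0 : 0 ≤ μ) (hμ : μ ≤ n * p) (hε : 0 ≤ ε) :
    exp (ε * ((1 - ε) * μ)) * (p * exp (-ε) + (1 - p)) ^ n ≤ exp (-(ε ^ 2 / 2) * μ) := by
  have hpow : (p * exp (-ε) + (1 - p)) ^ n ≤ exp (n * (p * (exp (-ε) - 1))) := by
    rw [exp_nat_mul]
    gcongr
    linarith [add_one_le_exp (p * (exp (-ε) - 1))]
  have hquad := exp_neg_le_one_sub_add_sq_div_two hε
  have hdec : exp (-ε) - 1 ≤ 0 := by linarith [exp_le_one_iff.mpr (neg_nonpos.mpr hε)]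
  calc exp (ε * ((1 - ε) * μ)) * (p * exp (-ε) + (1 - p)) ^ n
      ≤ exp (ε * ((1 - ε) * μ)) * exp (n * (p * (exp (-ε) - 1))) := by gcongr
    _ = exp (ε * ((1 - ε) * μ) + n * p * (exp (-ε) - 1)) := by rw [← exp_add, mul_assoc]
    _ ≤ exp (-(ε ^ 2 / 2) * μ) := exp_le_exp.mpr <| by
      nlinarith [mul_le_mul_of_nonpos_right hμ hdec, mul_le_mul_of_nonneg_left hquad hμ0]

theorem PMF.binomial_toMeasure_lt_le (p : ℝ≥0) (h : p ≤ 1) (n : ℕ) {μ ε : ℝ}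
    (hμ0 : 0 ≤ μ) (hμ : μ ≤ n * p) (hε : 0 ≤ ε) :
    (PMF.binomial p h n).toMeasure {k | ((k : ℕ) : ℝ) < (1 - ε) * μ}
      ≤ ENNReal.ofReal (exp (-(ε ^ 2 / 2) * μ)) := by
  set ν := (PMF.binomial p h n).toMeasure
  have hchernoff := measure_le_le_exp_mul_mgf (X := fun k : Fin (n + 1) => ((k : ℕ) : ℝ))
    (μ := ν) ((1 - ε) * μ) (neg_nonpos.mpr hε) (Integrable.of_finite)
  rw [PMF.mgf_binomial, neg_neg] at hchernoff
  calc ν {k | ((k : ℕ) : ℝ) < (1 - ε) * μ} ≤ ν {k | ((k : ℕ) : ℝ) ≤ (1 - ε) * μ} :=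
        measure_mono <| Set.setOf_subset_setOf.mpr fun _ => le_of_lt
    _ = ENNReal.ofReal (ν.real {k | ((k : ℕ) : ℝ) ≤ (1 - ε) * μ}) := (ofReal_measureReal).symm
    _ ≤ ENNReal.ofReal (exp (-(ε ^ 2 / 2) * μ)) := ENNReal.ofReal_le_ofReal <|
        hchernoff.trans (exp_mul_bernoulli_mgf_pow_le p.2 h hμ0 hμ hε)

/-- The distribution function `F(t)` of the radial coordinate in the hyperbolic disk of
radius `R`. -/
noncomputable def radialCDF (α R t : ℝ) : ℝ := (cosh (α * t) - 1) / (cosh (α * R) - 1)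

theorem cosh_sub_one_le_exp {x : ℝ} (hx : 0 ≤ x) : cosh x - 1 ≤ exp x := by
  rw [cosh_eq]
  linarith [exp_le_exp.mpr (by linarith : -x ≤ x)]

theorem exp_div_four_le_cosh_sub_one {x : ℝ} (hx : log 4 ≤ x) : exp x / 4 ≤ cosh x - 1 := by
  have h4 : 4 ≤ exp x := by simpa [exp_log] using exp_le_exp.mpr hx
  rw [cosh_eq]
  linarith [exp_pos (-x)]

theorem exp_div_four_le_radialCDF {α R t : ℝ} (hαR : 0 < α * R) (ht : log 4 ≤ α * t) :
    exp (α * (t - R)) / 4 ≤ radialCDF α R t := by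
  have hden : 0 < cosh (α * R) - 1 := sub_pos.mpr (one_lt_cosh.mpr hαR.ne')
  calc exp (α * (t - R)) / 4 = exp (α * t) / 4 / exp (α * R) := by
        rw [div_right_comm, ← exp_sub, mul_sub]
    _ ≤ radialCDF α R t := div_le_div₀ (by linarith [one_le_cosh (α * t)])
        (exp_div_four_le_cosh_sub_one ht) hden (cosh_sub_one_le_exp hαR.le)

theorem eventually_mul_rpow_le_mul_radialCDF {α : ℝ} (hα : 0 < α) (C c' : ℝ) :
    ∀ᶠ n : ℕ in atTop, exp (-α * (C / 2 + c')) / 4 * (n : ℝ) ^ (1 - α)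
      ≤ n * radialCDF α (2 * log n + C) ((2 * log n + C) / 2 - c') := by
  have hlog : Tendsto (fun n : ℕ => log n) atTop atTop :=
    tendsto_log_atTop.comp tendsto_natCast_atTop_atTop
  filter_upwards [hlog.eventually_gt_atTop (-C / 2),
    hlog.eventually_ge_atTop (log 4 / α - C / 2 + c'), eventually_gt_atTop 0] with n hR ht hn
  have hn' : (0 : ℝ) < n := Nat.cast_pos.mpr hn
  have hexp : exp (α * ((2 * log n + C) / 2 - c' - (2 * log n + C)))
      = exp (-α * (C / 2 + c')) * (n : ℝ) ^ (-α) := by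
    rw [rpow_def_of_pos hn', ← exp_add]
    ring_nf
  calc exp (-α * (C / 2 + c')) / 4 * (n : ℝ) ^ (1 - α)
      = n * (exp (α * ((2 * log n + C) / 2 - c' - (2 * log n + C))) / 4) := by
        rw [hexp, sub_eq_add_neg, rpow_add hn', rpow_one]
        ring
    _ ≤ n * radialCDF α (2 * log n + C) ((2 * log n + C) / 2 - c') := by
        gcongr
        refine exp_div_four_le_radialCDF (by nlinarith) ?_
        nlinarith [(div_le_iff₀ hα).mp (by linarith : log 4 / α ≤ log n + C / 2 - c')]

theorem binomial_center_vertices_lower_tail_general (α C c' : ℝ)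
    (hα : 1 / 2 < α) :
    ∃ c > 0, ∀ ε : ℝ, 0 < ε → ε < 1 → ∃ N : ℕ, ∀ n : ℕ, N ≤ n →
      ∀ h : Real.toNNReal
          ((Real.cosh (α * ((2 * Real.log n + C) / 2 - c')) - 1) /
            (Real.cosh (α * (2 * Real.log n + C)) - 1)) ≤ 1,
        (PMF.binomial
            (Real.toNNReal
              ((Real.cosh (α * ((2 * Real.log n + C) / 2 - c')) - 1) /
                (Real.cosh (α * (2 * Real.log n + C)) - 1))) h n).toMeasure
            {k : Fin (n + 1) | ((k : ℕ) : ℝ) < (1 - ε) * (c * (n : ℝ) ^ (1 - α))}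
          ≤ ENNReal.ofReal (Real.exp (-(ε ^ 2 / 2) * (c * (n : ℝ) ^ (1 - α)))) := by
  refine ⟨exp (-α * (C / 2 + c')) / 4, by positivity, fun ε hε _ => ?_⟩
  obtain ⟨N, hN⟩ := eventually_atTop.mp
    (eventually_mul_rpow_le_mul_radialCDF (by linarith : 0 < α) C c')
  refine ⟨N, fun n hn h => PMF.binomial_toMeasure_lt_le _ h n (by positivity) ?_ hε.le⟩
  exact (hN n hn).trans (by gcongr; exact Real.le_coe_toNNReal _)

/-- Chernoff-type lower-tail bound for the number of vertices of a hyperbolic random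
graph lying in the disk `B_0(R_n/2 - c')`: there is a constant `c > 0` such that for
every `ε ∈ (0,1)` and all sufficiently large `n`, a binomial random variable `X` with
parameters `n` and `p_n = (cosh(α(R_n/2 - c')) - 1)/(cosh(α R_n) - 1)` satisfies
`P[X < (1-ε) c n^(1-α)] ≤ exp(-(ε²/2) c n^(1-α))`. -/
theorem binomial_center_vertices_lower_tail (α C c' : ℝ)
    (hα : 1 / 2 < α) (hα1 : α < 1) (hc' : 0 ≤ c') :
    ∃ c > 0, ∀ ε : ℝ, 0 < ε → ε < 1 → ∃ N : ℕ, ∀ n : ℕ, N ≤ n →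
      ∀ h : Real.toNNReal
          ((Real.cosh (α * ((2 * Real.log n + C) / 2 - c')) - 1) /
            (Real.cosh (α * (2 * Real.log n + C)) - 1)) ≤ 1,
        (PMF.binomial
            (Real.toNNReal
              ((Real.cosh (α * ((2 * Real.log n + C) / 2 - c')) - 1) /
                (Real.cosh (α * (2 * Real.log n + C)) - 1))) h n).toMeasure
            {k : Fin (n + 1) | ((k : ℕ) : ℝ) < (1 - ε) * (c * (n : ℝ) ^ (1 - α))}
          ≤ ENNReal.ofReal (Real.exp (-(ε ^ 2 / 2) * (c * (n : ℝ) ^ (1 - α)))) :=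
  binomial_center_vertices_lower_tail_general α C c' hα
end

section
/- Fix α ∈ (1/2, 1) and C ∈ ℝ, and for n ≥ 2 set R_n = 2 ln n + C. Then for every constant c > 0 there exist a constant c₂ > 0 and N such that for all n ≥ N and all r with 0 ≤ r ≤ R_n/2 − c₂, n · I(r, R_n) ≥ c · √n. (In the hyperbolic random graph model, the expected degree of a vertex with radial coordinate r ≤ R_n/2 − c₂ is at least c √n.) -/
/-- `hrgI α r R` is the probability measure `μ(B_r(R) ∩ B_0(R))` in the hyperbolic
random graph model: the probability that a vertex sampled in the disk of radius `R`
(with radial density `α sinh(α s)/(cosh(α R) - 1)` and uniform angle) lies within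
hyperbolic distance `R` of the point with polar coordinates `(r, 0)`. -/
noncomputable def hrgI (α r R : ℝ) : ℝ :=
  (1 / (2 * Real.pi)) * ∫ φ in (0 : ℝ)..(2 * Real.pi), ∫ s in (0 : ℝ)..R,
    if Real.cosh r * Real.cosh s - Real.sinh r * Real.sinh s * Real.cos φ ≤ Real.cosh R
    then α * Real.sinh (α * s) / (Real.cosh (α * R) - 1) else 0

/-!
Every point at radius `s ≤ R - 2` and angle `|φ| ≤ e^{-r/2}` is within distance `R` of the point
`(r, 0)` when `r ≤ R - 2`: by the hyperbolic law of cosines the angle adds only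
`sinh r sinh s (1 - cos φ) ≤ e^s / 8` to `cosh (r - s)`. So `I(r, R)` is at least `e^{-r/2} / (2π)`
times the radial mass of `[0, R - 2]`, which is at least `e^{-2α} / 2`. For `r ≤ R_n/2 - c₂` we have
`n e^{-r/2} ≥ e^{c₂/2 - C/4} √n`, and a large `c₂` absorbs all the constants.
-/

open Real MeasureTheory intervalIntegral

theorem Real.sinh_le_exp_div_two (x : ℝ) : sinh x ≤ exp x / 2 := by
  rw [sinh_eq]; linarith [exp_pos (-x)]

theorem Real.exp_div_two_le_cosh (x : ℝ) : exp x / 2 ≤ cosh x := by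
  rw [cosh_eq]; linarith [exp_pos (-x)]

theorem mul_le_integral_of_le_on {f : ℝ → ℝ} {a b c D : ℝ} (hac : a ≤ c) (hcb : c ≤ b)
    (hf : IntervalIntegrable f volume a b) (hf0 : ∀ x ∈ Set.Ioc a b, 0 ≤ f x)
    (hD : ∀ x ∈ Set.Icc a c, D ≤ f x) :
    (c - a) * D ≤ ∫ x in a..b, f x := by
  calc (c - a) * D = ∫ _ in a..c, D := by simp
    _ ≤ ∫ x in a..c, f x :=
      integral_mono_on hac intervalIntegrable_const
        (hf.mono_set (Set.uIcc_subset_uIcc_left (Set.mem_uIcc_of_le hac hcb))) hD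
    _ ≤ ∫ x in a..b, f x :=
      integral_mono_interval le_rfl hac hcb ((ae_restrict_iff' measurableSet_Ioc).2
        (Filter.Eventually.of_forall hf0)) hf

theorem sqrt_mul_exp_le_mul_exp_neg_half {n C c₂ r : ℝ} (hn : 0 < n)
    (hr : r ≤ (2 * log n + C) / 2 - c₂) :
    √n * exp (c₂ / 2 - C / 4) ≤ n * exp (-r / 2) := by
  rw [sqrt_eq_rpow, rpow_def_of_pos hn, ← exp_add]
  nth_rw 2 [← exp_log hn]
  rw [← exp_add, exp_le_exp]
  linarith

noncomputable section

namespace HyperbolicRandomGraph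

/-- `cosh` of the hyperbolic distance between the points with polar coordinates `(r, 0)` and
`(s, φ)`. -/
def coshDist (r s φ : ℝ) : ℝ := cosh r * cosh s - sinh r * sinh s * cos φ

def radialDensity (α R s : ℝ) : ℝ := α * sinh (α * s) / (cosh (α * R) - 1)

def neighbourDensity (α r R φ s : ℝ) : ℝ :=
  if coshDist r s φ ≤ cosh R then radialDensity α R s else 0

def angularSlice (α r R φ : ℝ) : ℝ := ∫ s in (0 : ℝ)..R, neighbourDensity α r R φ s

theorem hrgI_eq_integral_angularSlice (α r R : ℝ) :
    hrgI α r R = (1 / (2 * π)) * ∫ φ in (0 : ℝ)..(2 * π), angularSlice α r R φ := rfl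

theorem coshDist_eq (r s φ : ℝ) :
    coshDist r s φ = cosh (r - s) + sinh r * sinh s * (1 - cos φ) := by
  rw [coshDist, cosh_sub]; ring

theorem coshDist_le_cosh {r s φ R : ℝ} (hr0 : 0 ≤ r) (hr : r ≤ R - 2) (hs0 : 0 ≤ s)
    (hs : s ≤ R - 2) (hφ : |φ| ≤ exp (-r / 2)) : coshDist r s φ ≤ cosh R := by
  have hangle : 1 - cos φ ≤ exp (-r) / 2 := by
    have hsq : φ ^ 2 ≤ exp (-r) := by
      calc φ ^ 2 = |φ| ^ 2 := (sq_abs φ).symm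
        _ ≤ exp (-r / 2) ^ 2 := by gcongr
        _ = exp (-r) := by rw [← exp_nat_mul]; ring_nf
    linarith [one_sub_sq_div_two_le_cos (x := φ)]
  have hperturb : sinh r * sinh s * (1 - cos φ) ≤ exp s / 8 := by
    calc sinh r * sinh s * (1 - cos φ) ≤ exp r / 2 * (exp s / 2) * (exp (-r) / 2) := by
          have hsr := sinh_nonneg_iff.2 hr0
          have hss := sinh_nonneg_iff.2 hs0
          gcongr
          · linarith [cos_le_one φ]
          · exact sinh_le_exp_div_two r
          · exact sinh_le_exp_div_two s
      _ = exp s / 8 := by rw [exp_neg]; field_simp; norm_num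
  have hcenter : cosh (r - s) ≤ exp (R - 2) := by
    calc cosh (r - s) ≤ cosh (R - 2) := by
          rw [cosh_le_cosh, abs_of_nonneg (by linarith : (0 : ℝ) ≤ R - 2), abs_le]
          constructor <;> linarith
      _ ≤ exp (R - 2) := by
          rw [cosh_eq]; linarith [exp_le_exp.2 (by linarith : -(R - 2) ≤ R - 2)]
  have hexp2 : 9 / 4 ≤ exp 2 := by linarith [add_one_le_exp (2 : ℝ)]
  have hexpR : exp R = exp (R - 2) * exp 2 := by rw [← exp_add]; ring_nf
  have hs' : exp s ≤ exp (R - 2) := exp_le_exp.2 hs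
  -- `cosh (r - s) + e^s / 8 ≤ (9 / 8) e^{R - 2} ≤ e^R / 2`
  rw [coshDist_eq]
  nlinarith [exp_div_two_le_cosh R, exp_pos (R - 2)]

theorem radialDensity_nonneg (α R : ℝ) {s : ℝ} (hs : 0 ≤ s) : 0 ≤ radialDensity α R s := by
  have hK : 0 ≤ cosh (α * R) - 1 := by linarith [one_le_cosh (α * R)]
  rcases le_total 0 α with hα | hα
  · exact div_nonneg (mul_nonneg hα (sinh_nonneg_iff.2 (mul_nonneg hα hs))) hK
  · exact div_nonneg (mul_nonneg_of_nonpos_of_nonpos hα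
      (sinh_nonpos_iff.2 (mul_nonpos_of_nonpos_of_nonneg hα hs))) hK

theorem integral_radialDensity (α R a : ℝ) :
    ∫ s in (0 : ℝ)..a, radialDensity α R s = (cosh (α * a) - 1) / (cosh (α * R) - 1) := by
  have hderiv (x : ℝ) : HasDerivAt (fun s => cosh (α * s) / (cosh (α * R) - 1))
      (radialDensity α R x) x := by
    have := ((hasDerivAt_id x).const_mul α).cosh.div_const (cosh (α * R) - 1)
    simpa [radialDensity, mul_comm α] using this
  rw [integral_eq_sub_of_hasDerivAt (fun x _ => hderiv x)
    (by unfold radialDensity; apply Continuous.intervalIntegrable; fun_prop)]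
  simp [sub_div]

theorem exp_neg_two_mul_div_two_le_integral_radialDensity {α R : ℝ} (hα : 0 < α)
    (hR : 4 ≤ exp (α * (R - 2))) :
    exp (-(2 * α)) / 2 ≤ ∫ s in (0 : ℝ)..(R - 2), radialDensity α R s := by
  have hR2 : 0 < α * (R - 2) := by
    by_contra! h; linarith [exp_le_one_iff.2 h]
  have hαR : 0 < α * R := by nlinarith
  have hsplit : exp (α * R) = exp (α * (R - 2)) * exp (2 * α) := by rw [← exp_add]; ring_nf
  have hK : 0 < cosh (α * R) - 1 := by
    linarith [one_lt_cosh.2 hαR.ne']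
  have hupper : cosh (α * R) - 1 ≤ exp (α * R) / 2 := by
    rw [cosh_eq]; linarith [exp_le_one_iff.2 (by linarith : -(α * R) ≤ 0)]
  rw [integral_radialDensity, le_div_iff₀ hK]
  calc exp (-(2 * α)) / 2 * (cosh (α * R) - 1) ≤ exp (-(2 * α)) / 2 * (exp (α * R) / 2) := by
        gcongr
    _ = exp (α * (R - 2)) / 4 := by rw [hsplit, exp_neg]; field_simp; norm_num
    _ ≤ cosh (α * (R - 2)) - 1 := by linarith [exp_div_two_le_cosh (α * (R - 2))]

theorem neighbourDensity_nonneg (α r R φ : ℝ) {s : ℝ} (hs : 0 ≤ s) :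
    0 ≤ neighbourDensity α r R φ s := by
  unfold neighbourDensity
  split_ifs
  exacts [radialDensity_nonneg α R hs, le_rfl]

theorem neighbourDensity_le_radialDensity (α r R φ : ℝ) {s : ℝ} (hs : 0 ≤ s) :
    neighbourDensity α r R φ s ≤ radialDensity α R s := by
  unfold neighbourDensity
  split_ifs
  exacts [le_rfl, radialDensity_nonneg α R hs]

theorem measurable_neighbourDensity (α r R : ℝ) :
    Measurable fun p : ℝ × ℝ => neighbourDensity α r R p.1 p.2 := by
  unfold neighbourDensity coshDist radialDensity
  exact Measurable.ite (measurableSet_le (by fun_prop) measurable_const) (by fun_prop)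
    measurable_const

theorem intervalIntegrable_neighbourDensity (α r R φ a b : ℝ) :
    IntervalIntegrable (neighbourDensity α r R φ) volume a b := by
  have hradial : IntervalIntegrable (radialDensity α R) volume a b := by
    unfold radialDensity; apply Continuous.intervalIntegrable; fun_prop
  refine hradial.mono_fun ?_ (Filter.Eventually.of_forall fun s => ?_)
  · exact ((measurable_neighbourDensity α r R).comp measurable_prodMk_left).aestronglyMeasurable
  · dsimp only [neighbourDensity]
    split_ifs <;> simp

theorem angularSlice_nonneg (α r : ℝ) {R : ℝ} (hR : 0 ≤ R) (φ : ℝ) :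
    0 ≤ angularSlice α r R φ :=
  integral_nonneg hR fun _ hs => neighbourDensity_nonneg α r R φ hs.1

theorem angularSlice_le_integral_radialDensity (α r : ℝ) {R : ℝ} (hR : 0 ≤ R) (φ : ℝ) :
    angularSlice α r R φ ≤ ∫ s in (0 : ℝ)..R, radialDensity α R s := by
  refine integral_mono_on hR (intervalIntegrable_neighbourDensity α r R φ 0 R) ?_
    fun _ hs => neighbourDensity_le_radialDensity α r R φ hs.1
  unfold radialDensity; apply Continuous.intervalIntegrable; fun_prop

theorem stronglyMeasurable_angularSlice (α r : ℝ) {R : ℝ} (hR : 0 ≤ R) :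
    StronglyMeasurable (angularSlice α r R) := by
  have h : StronglyMeasurable fun φ => ∫ s in Set.Ioc 0 R, neighbourDensity α r R φ s :=
    (measurable_neighbourDensity α r R).stronglyMeasurable.integral_prod_right'
  rwa [show angularSlice α r R = _ from funext fun φ => integral_of_le hR]

theorem intervalIntegrable_angularSlice (α r : ℝ) {R : ℝ} (hR : 0 ≤ R) (a b : ℝ) :
    IntervalIntegrable (angularSlice α r R) volume a b := by
  refine (intervalIntegrable_const (c := ∫ s in (0 : ℝ)..R, radialDensity α R s)).mono_fun'
    (stronglyMeasurable_angularSlice α r hR).aestronglyMeasurable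
    (Filter.Eventually.of_forall fun φ => ?_)
  dsimp only
  rw [Real.norm_of_nonneg (angularSlice_nonneg α r hR φ)]
  exact angularSlice_le_integral_radialDensity α r hR φ

theorem integral_radialDensity_le_angularSlice {α r R φ : ℝ} (hr0 : 0 ≤ r) (hr : r ≤ R - 2)
    (hφ : |φ| ≤ exp (-r / 2)) :
    ∫ s in (0 : ℝ)..(R - 2), radialDensity α R s ≤ angularSlice α r R φ := by
  have hinner : ∫ s in (0 : ℝ)..(R - 2), neighbourDensity α r R φ s
      = ∫ s in (0 : ℝ)..(R - 2), radialDensity α R s := by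
    refine integral_congr fun s hs => ?_
    rw [Set.uIcc_of_le (by linarith)] at hs
    exact if_pos (coshDist_le_cosh hr0 hr hs.1 hs.2 hφ)
  have hshell : 0 ≤ ∫ s in (R - 2)..R, neighbourDensity α r R φ s :=
    integral_nonneg (by linarith) fun s hs => neighbourDensity_nonneg α r R φ (by linarith [hs.1])
  rw [angularSlice, ← integral_add_adjacent_intervals (intervalIntegrable_neighbourDensity ..)
    (intervalIntegrable_neighbourDensity ..), hinner]
  linarith

theorem exp_neg_div_two_mul_le_hrgI {α r R : ℝ} (hα : 0 < α) (hR : 3 ≤ α * (R - 2))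
    (hr0 : 0 ≤ r) (hr : r ≤ R - 2) :
    exp (-r / 2) * exp (-(2 * α)) / (4 * π) ≤ hrgI α r R := by
  have hmass : exp (-(2 * α)) / 2 ≤ ∫ s in (0 : ℝ)..(R - 2), radialDensity α R s :=
    exp_neg_two_mul_div_two_le_integral_radialDensity hα
      (by linarith [add_one_le_exp (α * (R - 2))])
  have hwidth : exp (-r / 2) ≤ 2 * π := by
    linarith [exp_le_one_iff.2 (by linarith : -r / 2 ≤ 0), pi_gt_three]
  have hslices : (exp (-r / 2) - 0) * (exp (-(2 * α)) / 2)
      ≤ ∫ φ in (0 : ℝ)..(2 * π), angularSlice α r R φ :=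
    mul_le_integral_of_le_on (exp_pos _).le hwidth
      (intervalIntegrable_angularSlice α r (by linarith) _ _)
      (fun φ _ => angularSlice_nonneg α r (by linarith) φ)
      fun φ hφ => hmass.trans (integral_radialDensity_le_angularSlice hr0 hr
        (by rw [abs_of_nonneg hφ.1]; exact hφ.2))
  rw [hrgI_eq_integral_angularSlice]
  calc exp (-r / 2) * exp (-(2 * α)) / (4 * π)
      = 1 / (2 * π) * ((exp (-r / 2) - 0) * (exp (-(2 * α)) / 2)) := by
        field_simp; ring
    _ ≤ _ := by gcongr

end HyperbolicRandomGraph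

end

theorem expected_degree_inner_lower_bound_general (α C : ℝ)
    (hα : 1 / 2 < α) :
    ∀ c > 0, ∃ c₂ > 0, ∃ N : ℕ, ∀ n : ℕ, N ≤ n → ∀ r : ℝ,
      0 ≤ r → r ≤ (2 * Real.log n + C) / 2 - c₂ →
      c * Real.sqrt n ≤ (n : ℝ) * hrgI α r (2 * Real.log n + C) := by
  intro c hc
  set K := 4 * π * exp (2 * α) * exp (C / 4) with hK
  set c₂ := max 1 (2 * log (c * K))
  obtain ⟨N, hN⟩ := exists_nat_gt (exp ((8 - C) / 2))
  refine ⟨c₂, by positivity, N, fun n hn r hr0 hr => ?_⟩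
  have hNn : exp ((8 - C) / 2) < n := hN.trans_le (by exact_mod_cast hn)
  have hn0 : (0 : ℝ) < n := (exp_pos _).trans hNn
  have hR : 8 ≤ 2 * log n + C := by linarith [(lt_log_iff_exp_lt hn0).2 hNn]
  have hI := HyperbolicRandomGraph.exp_neg_div_two_mul_le_hrgI (α := α) (R := 2 * log n + C)
    (by linarith) (by nlinarith) hr0 (by linarith [le_max_left 1 (2 * log (c * K))])
  have hc₂ : c ≤ exp (c₂ / 2) / K := by
    rw [le_div_iff₀ (by positivity), ← exp_log (by positivity : 0 < c * K), exp_le_exp]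
    linarith [le_max_right 1 (2 * log (c * K))]
  calc c * √n ≤ exp (c₂ / 2) / K * √n := by gcongr
    _ = √n * exp (c₂ / 2 - C / 4) * exp (-(2 * α)) / (4 * π) := by
        rw [exp_sub, exp_neg, hK]; field_simp
    _ ≤ n * exp (-r / 2) * exp (-(2 * α)) / (4 * π) := by
        gcongr ?_ * _ / _; exact sqrt_mul_exp_le_mul_exp_neg_half hn0 hr
    _ = n * (exp (-r / 2) * exp (-(2 * α)) / (4 * π)) := by ring
    _ ≤ n * hrgI α r (2 * log n + C) := by gcongr

/-- In the hyperbolic random graph model with `R_n = 2 ln n + C`, for every constant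
`c > 0` there is a constant `c₂ > 0` such that for all sufficiently large `n`, the
expected degree `n · I(r, R_n)` of a vertex with radial coordinate
`r ≤ R_n/2 - c₂` is at least `c √n`. -/
theorem expected_degree_inner_lower_bound (α C : ℝ)
    (hα : 1 / 2 < α) (hα1 : α < 1) :
    ∀ c > 0, ∃ c₂ > 0, ∃ N : ℕ, ∀ n : ℕ, N ≤ n → ∀ r : ℝ,
      0 ≤ r → r ≤ (2 * Real.log n + C) / 2 - c₂ →
      c * Real.sqrt n ≤ (n : ℝ) * hrgI α r (2 * Real.log n + C) :=
  expected_degree_inner_lower_bound_general α C hα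
end
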